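/- Let h be a fixed nonzero Hermitian traceless 4×4 matrix with ‖h‖ ≤ 1, for each n ≥ 3 let H = H^{(n)} be the translation-invariant nearest-neighbor Hamiltonian on n qubits generated by h with tr(H_i H_j) = 0 for all i ≠ j, and fix δ ∈ (0,1) and a positive integer k. Let A = A^{(n)} be a sequence of operators, each traceless, of operator norm at most 1, and supported on at most k consecutive sites, satisfying ETH with profile f_A and with f_A(0) = 0. Then there is a constant C such that for all n ≥ 3: (1/d) Σ_j |A_{jj}|⁴ ≤ C n^{−2}, where d = 2^n. -/

import Mathlib

open Matrix Filter Finset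
open scoped Classical

/-- computational basis configurations of `n` qubits -/
abbrev Cfg (n : ℕ) := Fin n → Fin 2

/-- the site following `i` in the cyclic order on `ℤ/nℤ` -/
def nxt {n : ℕ} (i : Fin n) : Fin n :=
  ⟨(i.1 + 1) % n, Nat.mod_lt _ (Nat.lt_of_le_of_lt (Nat.zero_le _) i.2)⟩

/-- the operator acting as the 4×4 matrix `h` on the two neighboring sites `i, i+1`
and as the identity elsewhere -/
noncomputable def twoSite (n : ℕ) (i : Fin n)
    (h : Matrix (Fin 2 × Fin 2) (Fin 2 × Fin 2) ℂ) : Matrix (Cfg n) (Cfg n) ℂ :=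
  fun x y =>
    if ∀ j : Fin n, j ≠ i → j ≠ nxt i → x j = y j then
      h (x i, x (nxt i)) (y i, y (nxt i))
    else 0

/-- the translation-invariant nearest-neighbor Hamiltonian generated by `h` -/
noncomputable def ham (h : Matrix (Fin 2 × Fin 2) (Fin 2 × Fin 2) ℂ) (n : ℕ) :
    Matrix (Cfg n) (Cfg n) ℂ :=
  ∑ i : Fin n, twoSite n i h

/-- normalized trace ⟨X⟩ = tr X / dim -/
noncomputable def nTrace {d : Type*} [Fintype d] [DecidableEq d] (X : Matrix d d ℂ) : ℂ :=
  X.trace / (Fintype.card d)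

/-- the ℓ²→ℓ² operator norm of a matrix -/
noncomputable def opNorm {d : Type*} [Fintype d] [DecidableEq d] (X : Matrix d d ℂ) : ℝ :=
  ‖LinearMap.toContinuousLinearMap (Matrix.toEuclideanLin X)‖

/-- Heisenberg time evolution X ↦ e^{iHt} X e^{-iHt} -/
noncomputable def timeEv {d : Type*} [Fintype d] [DecidableEq d] (H : Matrix d d ℂ) (t : ℝ)
    (X : Matrix d d ℂ) : Matrix d d ℂ :=
  NormedSpace.exp ((Complex.I * t) • H) * X * NormedSpace.exp ((-(Complex.I * t)) • H)

/-- the window of `k` consecutive sites starting at `i0` -/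
def window {n : ℕ} (i0 : Fin n) (k : ℕ) : Finset (Fin n) :=
  (Finset.range k).image fun t =>
    (⟨(i0.1 + t) % n, Nat.mod_lt _ (Nat.lt_of_le_of_lt (Nat.zero_le _) i0.2)⟩ : Fin n)

/-- `M` acts as the identity outside the set `S` of sites, i.e. `M` is the conjugation, by the
permutation of tensor factors moving the sites of `S` to the front, of `m ⊗ I`. -/
def SupportedOn {n : ℕ} (S : Finset (Fin n)) (M : Matrix (Cfg n) (Cfg n) ℂ) : Prop :=
  (∀ x y : Cfg n, ¬(∀ j ∉ S, x j = y j) → M x y = 0) ∧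
  (∀ x y x' y' : Cfg n, (∀ j ∈ S, x j = x' j) → (∀ j ∈ S, y j = y' j) →
    (∀ j ∉ S, x j = y j) → (∀ j ∉ S, x' j = y' j) → M x y = M x' y')

/-- `M` is supported on at most `k` consecutive sites -/
def SupportedOnConsec {n : ℕ} (k : ℕ) (M : Matrix (Cfg n) (Cfg n) ℂ) : Prop :=
  ∃ i0 : Fin n, SupportedOn (window i0 k) M

/-- A family of eigenvalues is generic if `E p + E r = E q + E s` only for trivial reasons. -/
def GenericSpectrum {ι : Type*} (E : ι → ℝ) : Prop :=
  ∀ p q r s : ι, E p + E r = E q + E s → (p = q ∧ r = s) ∨ (p = s ∧ r = q)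

/-- The sequence of operators `A n` (with matrix elements taken in the eigenbasis `U n` of the
Hamiltonian, with eigenvalues `E n`) satisfies the eigenstate thermalization hypothesis with
profile `f` on the energy-density window `[-δ, δ]`: `f` is three times continuously
differentiable with `|f| ≤ 1`, and for every `p > 0` there is `C_p` with
`|A_{jj} - f (E_j / n)| ≤ C_p n^{-p}` for every `n` and every eigenstate `j` with `|E_j| ≤ δ n`. -/
def ETH (δ : ℝ) (E : ∀ n : ℕ, Cfg n → ℝ) (U : ∀ n : ℕ, Matrix (Cfg n) (Cfg n) ℂ)
    (A : ∀ n : ℕ, Matrix (Cfg n) (Cfg n) ℂ) (f : ℝ → ℂ) : Prop :=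
  ContDiffOn ℝ 3 f (Set.Icc (-δ) δ) ∧ (∀ x ∈ Set.Icc (-δ) δ, ‖f x‖ ≤ 1) ∧
  ∀ p : ℝ, 0 < p → ∃ Cp : ℝ, ∀ n : ℕ, 3 ≤ n → ∀ j : Cfg n, |E n j| ≤ δ * n →
    ‖((U n)ᴴ * A n * U n) j j - f (E n j / n)‖ ≤ Cp * (n : ℝ) ^ (-p)

/-!
Write `H = ∑ᵢ hᵢ` with `hᵢ = twoSite n i h`. Expanding `tr H⁴ = ∑ tr(h_a h_b h_c h_d)`, a term
vanishes as soon as one bond is disjoint from the three others: flipping the spins of that bond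
leaves the other three factors unchanged, so averaging over the flips replaces `h` by `tr h = 0`.
The surviving quadruples pair up into two overlapping pairs or cluster within distance two of one
bond, so there are `O(n²)` of them, each contributing `O(2ⁿ)`. Hence `∑ⱼ Eⱼ⁴ = tr H⁴ = O(n² 2ⁿ)`.

On the other side, ETH and `f_A(0) = 0` give `|A_jj| ≤ K |E_j| / n + O(n⁻²)` inside the energy
window, and outside it `|A_jj| ≤ 1 < |E_j| / (δ n)`. Raising to the fourth power and averaging over
the `2ⁿ` eigenstates gives the bound `O(n⁻²)`.
-/

section LinftyNorm
attribute [local instance] Matrix.linftyOpNormedAddCommGroup Matrix.linftyOpNormedRing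

variable {l m α : Type*} [Fintype l] [Fintype m] [NormedRing α]

lemma Matrix.sum_norm_le_linfty_opNorm (A : Matrix l m α) (i : l) : ∑ j, ‖A i j‖ ≤ ‖A‖ := by
  have := Finset.le_sup (f := fun i => ∑ j, ‖A i j‖₊) (Finset.mem_univ i)
  rw [← NNReal.coe_le_coe] at this
  push_cast at this
  rwa [linfty_opNorm_def]

lemma Matrix.linfty_opNorm_le_of_sum_norm_le {A : Matrix l m α} {c : ℝ} (hc : 0 ≤ c)
    (h : ∀ i, ∑ j, ‖A i j‖ ≤ c) : ‖A‖ ≤ c := by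
  lift c to NNReal using hc
  rw [linfty_opNorm_def, NNReal.coe_le_coe, Finset.sup_le_iff]
  intro i _
  rw [← NNReal.coe_le_coe]
  push_cast
  exact h i

lemma Matrix.norm_trace_le_card_mul_linfty_opNorm (A : Matrix m m α) :
    ‖A.trace‖ ≤ Fintype.card m * ‖A‖ := by
  calc ‖A.trace‖ ≤ ∑ i, ‖A i i‖ := norm_sum_le _ _
    _ ≤ ∑ _i : m, ‖A‖ := Finset.sum_le_sum fun i _ =>
        (Finset.single_le_sum (fun j _ => norm_nonneg (A i j)) (Finset.mem_univ i)).trans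
          (A.sum_norm_le_linfty_opNorm i)
    _ = Fintype.card m * ‖A‖ := by simp

end LinftyNorm

open scoped Matrix.Norms.L2Operator in
lemma Matrix.norm_apply_le_l2_opNorm {m n 𝕜 : Type*} [RCLike 𝕜] [Fintype m] [Fintype n]
    [DecidableEq n] (B : Matrix m n 𝕜) (i : m) (j : n) : ‖B i j‖ ≤ ‖B‖ := by
  have hcol := B.l2_opNorm_mulVec (EuclideanSpace.single j 1)
  rw [PiLp.norm_single, norm_one, mul_one] at hcol
  refine le_trans (le_of_eq ?_) ((PiLp.norm_apply_le _ i).trans hcol)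
  simp

open scoped Matrix.Norms.L2Operator in
lemma norm_conjTranspose_mul_mul_apply_le {d : Type*} [Fintype d] [DecidableEq d]
    {U : Matrix d d ℂ} (hU : U ∈ Matrix.unitaryGroup d ℂ) (A : Matrix d d ℂ) (j : d) :
    ‖(Uᴴ * A * U) j j‖ ≤ opNorm A := by
  have hU_star : Uᴴ ∈ unitary (Matrix d d ℂ) := Unitary.star_mem hU
  calc ‖(Uᴴ * A * U) j j‖ ≤ ‖Uᴴ * A * U‖ := Matrix.norm_apply_le_l2_opNorm _ j j
    _ = ‖A‖ := by rw [CStarRing.norm_mul_mem_unitary _ hU, CStarRing.norm_mem_unitary_mul _ hU_star]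
    _ = opNorm A := rfl

lemma trace_pow_eq_sum_pow_of_eq_unitary_conj {d : Type*} [Fintype d] [DecidableEq d]
    {X U : Matrix d d ℂ} {e : d → ℂ} (hU : U ∈ Matrix.unitaryGroup d ℂ)
    (hX : X = U * Matrix.diagonal e * Uᴴ) (k : ℕ) : (X ^ k).trace = ∑ j, e j ^ k := by
  set u := Unitary.toUnits ⟨U, hU⟩
  have hX' : X = (u : Matrix d d ℂ) * Matrix.diagonal e * (↑u⁻¹ : Matrix d d ℂ) := hX
  rw [hX', Units.conj_pow, Matrix.trace_units_conj, Matrix.diagonal_pow, Matrix.trace_diagonal]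
  rfl

lemma Finset.sum_pow_four {R ι : Type*} [Semiring R] [Fintype ι] (f : ι → R) :
    (∑ i, f i) ^ 4 = ∑ a, ∑ b, ∑ c, ∑ d, f a * f b * f c * f d := by
  rw [show (4 : ℕ) = 2 + 2 from rfl, pow_add, sq, Finset.sum_mul_sum, Finset.sum_mul_sum]
  simp only [Finset.sum_mul_sum, ← mul_assoc]
  exact Finset.sum_congr rfl fun a _ => Finset.sum_comm

section Counting
variable {ι : Type*} (R : ι → ι → Prop)

def Isolated (a b c d : ι) : Prop := ¬R a b ∧ ¬R a c ∧ ¬R a d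

def HasIsolated (a b c d : ι) : Prop :=
  Isolated R a b c d ∨ Isolated R b c d a ∨ Isolated R c d a b ∨ Isolated R d a b c

variable {R}

/-- A graph on four vertices without isolated vertices has a perfect matching or a vertex adjacent
to all others; in the second case every vertex is within distance two of the first one. -/
lemma pairing_or_star_of_not_hasIsolated (hsymm : ∀ x y, R x y → R y x) (hrefl : ∀ x, R x x)
    {a b c d : ι} (h : ¬HasIsolated R a b c d) :
    (R a b ∧ R c d) ∨ (R a c ∧ R b d) ∨ (R a d ∧ R b c) ∨
      (Relation.Comp R R a b ∧ Relation.Comp R R a c ∧ Relation.Comp R R a d) := by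
  have : (R a b ∧ R c d) ∨ (R a c ∧ R b d) ∨ (R a d ∧ R b c) ∨ (R a b ∧ R a c ∧ R a d) ∨
      (R b a ∧ R b c ∧ R b d) ∨ (R c a ∧ R c b ∧ R c d) ∨ (R d a ∧ R d b ∧ R d c) := by
    simp only [HasIsolated, Isolated] at h
    grind
  rcases this with h | h | h | ⟨h₁, h₂, h₃⟩ | ⟨h₁, h₂, h₃⟩ | ⟨h₁, h₂, h₃⟩ | ⟨h₁, h₂, h₃⟩
  · exact Or.inl h
  · exact Or.inr (Or.inl h)
  · exact Or.inr (Or.inr (Or.inl h))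
  all_goals refine Or.inr (Or.inr (Or.inr ⟨?_, ?_, ?_⟩))
  · exact ⟨a, hrefl a, h₁⟩
  · exact ⟨a, hrefl a, h₂⟩
  · exact ⟨a, hrefl a, h₃⟩
  · exact ⟨b, hsymm b a h₁, hrefl b⟩
  · exact ⟨b, hsymm b a h₁, h₂⟩
  · exact ⟨b, hsymm b a h₁, h₃⟩
  · exact ⟨c, hsymm c a h₁, h₂⟩
  · exact ⟨c, hsymm c a h₁, hrefl c⟩
  · exact ⟨c, hsymm c a h₁, h₃⟩
  · exact ⟨d, hsymm d a h₁, h₂⟩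
  · exact ⟨d, hsymm d a h₁, h₃⟩
  · exact ⟨d, hsymm d a h₁, hrefl d⟩

lemma card_filter_comp_le [Fintype ι] {m : ℕ} (hm : ∀ a, #{b | R a b} ≤ m) (a : ι) :
    #{b | Relation.Comp R R a b} ≤ m ^ 2 := by
  calc #{b | Relation.Comp R R a b} ≤ #(({e | R a e} : Finset ι).biUnion fun e => {b | R e b}) :=
        Finset.card_le_card fun b hb => by
          obtain ⟨e, hae, heb⟩ := (Finset.mem_filter.mp hb).2
          exact Finset.mem_biUnion.mpr ⟨e, by simpa using hae, by simpa using heb⟩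
    _ ≤ ∑ e ∈ ({e | R a e} : Finset ι), #{b | R e b} := Finset.card_biUnion_le
    _ ≤ ∑ _e ∈ ({e | R a e} : Finset ι), m := Finset.sum_le_sum fun e _ => hm e
    _ ≤ m ^ 2 := by rw [Finset.sum_const, smul_eq_mul, sq]; exact Nat.mul_le_mul_right m (hm a)

section Sums
variable [Fintype ι] {w : ι → ι → ℝ} {m : ℝ}

lemma sum_pairing_products_le (hw : ∀ a b, 0 ≤ w a b) (hm : ∀ a, ∑ b, w a b ≤ m) :
    ∑ a, ∑ b, ∑ c, ∑ d, (w a b * w c d + w a c * w b d + w a d * w b c) ≤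
      3 * (m * Fintype.card ι) ^ 2 := by
  have hrow : ∀ a, 0 ≤ ∑ b, w a b := fun a => Finset.sum_nonneg fun _ _ => hw _ _
  have hrowrow : ∀ a b, (∑ c, w a c) * ∑ d, w b d ≤ m * m := fun a b =>
    mul_le_mul (hm a) (hm b) (hrow b) ((hrow a).trans (hm a))
  have htot : ∑ a, ∑ b, w a b ≤ m * Fintype.card ι := by
    simpa [mul_comm] using Finset.sum_le_sum fun a (_ : a ∈ Finset.univ) => hm a
  have htot0 : 0 ≤ ∑ a, ∑ b, w a b := Finset.sum_nonneg fun a _ => hrow a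
  have h1 : ∑ a, ∑ b, ∑ c, ∑ d, w a b * w c d = (∑ a, ∑ b, w a b) * ∑ c, ∑ d, w c d := by
    simp only [Finset.sum_mul]
    simp only [Finset.mul_sum]
  have h2 : ∑ a, ∑ b, ∑ c, ∑ d, w a c * w b d = ∑ a, ∑ b, (∑ c, w a c) * ∑ d, w b d := by
    simp only [Finset.sum_mul_sum]
  have h3 : ∑ a, ∑ b, ∑ c, ∑ d, w a d * w b c = ∑ a, ∑ b, (∑ c, w b c) * ∑ d, w a d := by
    simp only [Finset.sum_mul_sum, mul_comm (w _ _) (w _ _)]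
  calc ∑ a, ∑ b, ∑ c, ∑ d, (w a b * w c d + w a c * w b d + w a d * w b c)
      = (∑ a, ∑ b, w a b) * (∑ c, ∑ d, w c d) + ∑ a, ∑ b, (∑ c, w a c) * (∑ d, w b d)
          + ∑ a, ∑ b, (∑ c, w b c) * (∑ d, w a d) := by
        simp only [Finset.sum_add_distrib, h1, h2, h3]
    _ ≤ (m * Fintype.card ι) * (m * Fintype.card ι) + ∑ _a : ι, ∑ _b : ι, m * m
          + ∑ _a : ι, ∑ _b : ι, m * m :=
        add_le_add (add_le_add (mul_le_mul htot htot htot0 (htot0.trans htot))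
          (Finset.sum_le_sum fun a _ => Finset.sum_le_sum fun b _ => hrowrow a b))
          (Finset.sum_le_sum fun a _ => Finset.sum_le_sum fun b _ => hrowrow b a)
    _ = 3 * (m * Fintype.card ι) ^ 2 := by simp; ring

lemma sum_star_products_le (hw : ∀ a b, 0 ≤ w a b) (hm : ∀ a, ∑ b, w a b ≤ m) :
    ∑ a, ∑ b, ∑ c, ∑ d, w a b * w a c * w a d ≤ m ^ 3 * Fintype.card ι := by
  have hrow : ∀ a, 0 ≤ ∑ b, w a b := fun a => Finset.sum_nonneg fun _ _ => hw _ _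
  have hprod : ∀ a, ∑ b, ∑ c, ∑ d, w a b * w a c * w a d =
      (∑ b, w a b) * (∑ c, w a c) * ∑ d, w a d := fun a => by
    rw [Finset.sum_mul_sum]
    simp only [Finset.sum_mul]
    simp only [Finset.mul_sum]
  calc ∑ a, ∑ b, ∑ c, ∑ d, w a b * w a c * w a d
      = ∑ a, (∑ b, w a b) * (∑ c, w a c) * (∑ d, w a d) := Finset.sum_congr rfl fun a _ => hprod a
    _ ≤ ∑ _a : ι, m * m * m := Finset.sum_le_sum fun a _ =>
        have hm0 : 0 ≤ m := (hrow a).trans (hm a)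
        mul_le_mul (mul_le_mul (hm a) (hm a) (hrow a) hm0) (hm a) (hrow a) (mul_nonneg hm0 hm0)
    _ = m ^ 3 * Fintype.card ι := by simp; ring

end Sums

lemma sum_ite_not_hasIsolated_le [Fintype ι] (hsymm : ∀ x y, R x y → R y x)
    (hrefl : ∀ x, R x x) {m : ℕ} (hm : ∀ a, #{b | R a b} ≤ m) :
    ∑ a, ∑ b, ∑ c, ∑ d, (if HasIsolated R a b c d then 0 else 1 : ℝ) ≤
      3 * (m * Fintype.card ι) ^ 2 + (m ^ 2) ^ 3 * Fintype.card ι := by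
  set w : ι → ι → ℝ := fun a b => if R a b then 1 else 0
  set w₂ : ι → ι → ℝ := fun a b => if Relation.Comp R R a b then 1 else 0
  have hw : ∀ a b, 0 ≤ w a b := fun a b => by positivity
  have hw₂ : ∀ a b, 0 ≤ w₂ a b := fun a b => by positivity
  have hpoint : ∀ a b c d, (if HasIsolated R a b c d then 0 else 1 : ℝ) ≤
      (w a b * w c d + w a c * w b d + w a d * w b c) + w₂ a b * w₂ a c * w₂ a d := by
    intro a b c d
    split_ifs with h
    · positivity
    have h1 := mul_nonneg (hw a b) (hw c d)
    have h2 := mul_nonneg (hw a c) (hw b d)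
    have h3 := mul_nonneg (hw a d) (hw b c)
    have h4 := mul_nonneg (mul_nonneg (hw₂ a b) (hw₂ a c)) (hw₂ a d)
    rcases pairing_or_star_of_not_hasIsolated hsymm hrefl h with
      ⟨hx, hy⟩ | ⟨hx, hy⟩ | ⟨hx, hy⟩ | ⟨hx, hy, hz⟩
    · have : w a b * w c d = 1 := by simp [w, hx, hy]
      linarith
    · have : w a c * w b d = 1 := by simp [w, hx, hy]
      linarith
    · have : w a d * w b c = 1 := by simp [w, hx, hy]
      linarith
    · have : w₂ a b * w₂ a c * w₂ a d = 1 := by simp [w₂, hx, hy, hz]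
      linarith
  have hdeg : ∀ a, ∑ b, w a b ≤ m := fun a => by
    simp only [w, Finset.sum_boole]
    exact_mod_cast hm a
  have hdeg₂ : ∀ a, ∑ b, w₂ a b ≤ (m ^ 2 : ℕ) := fun a => by
    simp only [w₂, Finset.sum_boole]
    exact_mod_cast card_filter_comp_le hm a
  calc ∑ a, ∑ b, ∑ c, ∑ d, (if HasIsolated R a b c d then 0 else 1 : ℝ)
      ≤ ∑ a, ∑ b, ∑ c, ∑ d, ((w a b * w c d + w a c * w b d + w a d * w b c) +
          w₂ a b * w₂ a c * w₂ a d) :=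
        Finset.sum_le_sum fun a _ => Finset.sum_le_sum fun b _ => Finset.sum_le_sum fun c _ =>
          Finset.sum_le_sum fun d _ => hpoint a b c d
    _ ≤ 3 * (m * Fintype.card ι) ^ 2 + (m ^ 2 : ℕ) ^ 3 * Fintype.card ι := by
        simp only [Finset.sum_add_distrib]
        exact add_le_add (by simpa [Finset.sum_add_distrib] using sum_pairing_products_le hw hdeg)
          (sum_star_products_le hw₂ hdeg₂)
    _ = _ := by push_cast; ring

end Counting

/-- Adding `v` to a configuration flips the spins at the sites where `v = 1`. -/
def IsLocalOn {ι : Type*} (S : Finset ι) (M : Matrix (ι → Fin 2) (ι → Fin 2) ℂ) : Prop :=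
  (∀ x y, M x y ≠ 0 → ∀ j ∉ S, x j = y j) ∧
    ∀ v : ι → Fin 2, (∀ j ∈ S, v j = 0) → ∀ x y, M (x + v) (y + v) = M x y

namespace IsLocalOn
variable {ι : Type*} [Fintype ι] [DecidableEq ι] {S T : Finset ι}
  {M N : Matrix (ι → Fin 2) (ι → Fin 2) ℂ}

lemma mul (hM : IsLocalOn S M) (hN : IsLocalOn T N) : IsLocalOn (S ∪ T) (M * N) := by
  constructor
  · intro x y hxy j hj
    obtain ⟨z, -, hz⟩ := Finset.exists_ne_zero_of_sum_ne_zero hxy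
    rw [Finset.mem_union, not_or] at hj
    exact (hM.1 x z (left_ne_zero_of_mul hz) j hj.1).trans
      (hN.1 z y (right_ne_zero_of_mul hz) j hj.2)
  · intro v hv x y
    have hvS : ∀ j ∈ S, v j = 0 := fun j hj => hv j (Finset.mem_union_left T hj)
    have hvT : ∀ j ∈ T, v j = 0 := fun j hj => hv j (Finset.mem_union_right S hj)
    simp only [Matrix.mul_apply]
    rw [← Equiv.sum_comp (Equiv.addRight v)]
    exact Finset.sum_congr rfl fun z _ => by rw [Equiv.coe_addRight, hM.2 v hvS, hN.2 v hvT]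

lemma mul_apply_self_of_disjoint (hM : IsLocalOn S M) (hN : IsLocalOn T N)
    (hST : Disjoint S T) (x : ι → Fin 2) : (M * N) x x = M x x * N x x := by
  rw [Matrix.mul_apply, Finset.sum_eq_single x]
  · intro y _ hyx
    by_contra hne
    refine hyx (funext fun j => ?_)
    by_cases hj : j ∈ S
    · exact hN.1 y x (right_ne_zero_of_mul hne) j (Finset.disjoint_left.mp hST hj)
    · exact (hM.1 x y (left_ne_zero_of_mul hne) j hj).symm
  · simp

end IsLocalOn

section SpinChain
variable {n : ℕ}

lemma nxt_val (i : Fin n) : (nxt i).1 = if i.1 + 1 = n then 0 else i.1 + 1 := by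
  have := i.2
  split_ifs with h
  · simp [nxt, h]
  · exact Nat.mod_eq_of_lt (by omega)

lemma nxt_injective : Function.Injective (nxt (n := n)) := fun i j hij => by
  have hv := congrArg Fin.val hij
  rw [nxt_val, nxt_val] at hv
  have := i.2
  have := j.2
  ext
  split_ifs at hv <;> omega

lemma nxt_ne_self (hn : 2 ≤ n) (i : Fin n) : nxt i ≠ i := fun hi => by
  have hv := congrArg Fin.val hi
  rw [nxt_val] at hv
  split_ifs at hv <;> omega

def bond (i : Fin n) : Finset (Fin n) := {i, nxt i}

def Overlap (i j : Fin n) : Prop := ¬Disjoint (bond i) (bond j)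

lemma Overlap.symm {i j : Fin n} (h : Overlap i j) : Overlap j i := fun hd => h hd.symm

lemma overlap_self (i : Fin n) : Overlap i i := by simp [Overlap, bond]

lemma card_filter_overlap_le (a : Fin n) :
    #{b | Overlap a b} ≤ 3 := by
  have hsub : ({b | Overlap a b} : Finset (Fin n)) ⊆
      {a, nxt a} ∪ ({b | nxt b = a} : Finset (Fin n)) := fun b hb => by
    obtain ⟨x, hxa, hxb⟩ := Finset.not_disjoint_iff.mp (Finset.mem_filter.mp hb).2
    simp only [bond, Finset.mem_insert, Finset.mem_singleton] at hxa hxb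
    simp only [Finset.mem_union, Finset.mem_insert, Finset.mem_singleton, Finset.mem_filter,
      Finset.mem_univ, true_and]
    rcases hxa with rfl | rfl <;> rcases hxb with hxb | hxb
    · exact Or.inl (Or.inl hxb.symm)
    · exact Or.inr hxb.symm
    · exact Or.inl (Or.inr hxb.symm)
    · exact Or.inl (Or.inl (nxt_injective hxb).symm)
  have hpre : #({b | nxt b = a} : Finset (Fin n)) ≤ 1 :=
    Finset.card_le_one.mpr fun b hb b' hb' => nxt_injective
      ((Finset.mem_filter.mp hb).2.trans (Finset.mem_filter.mp hb').2.symm)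
  calc _ ≤ #(({a, nxt a} : Finset (Fin n)) ∪ ({b | nxt b = a} : Finset (Fin n))) :=
        Finset.card_le_card hsub
    _ ≤ #({a, nxt a} : Finset (Fin n)) + #({b | nxt b = a} : Finset (Fin n)) :=
        Finset.card_union_le _ _
    _ ≤ 2 + 1 := add_le_add Finset.card_le_two hpre

variable (h : Matrix (Fin 2 × Fin 2) (Fin 2 × Fin 2) ℂ)

lemma isLocalOn_twoSite (i : Fin n) : IsLocalOn (bond i) (twoSite n i h) := by
  have hbond : ∀ j, j ∉ bond i ↔ j ≠ i ∧ j ≠ nxt i := by simp [bond]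
  constructor
  · intro x y hxy j hj
    rw [twoSite, ite_ne_right_iff] at hxy
    exact hxy.1 j ((hbond j).1 hj).1 ((hbond j).1 hj).2
  · intro v hv x y
    have hvi : v i = 0 := hv i (by simp [bond])
    have hvn : v (nxt i) = 0 := hv (nxt i) (by simp [bond])
    simp only [twoSite, Pi.add_apply, hvi, hvn, add_zero, add_left_inj]

lemma trace_twoSite_mul_eq_zero (hn : 2 ≤ n) (htr : h.trace = 0) {i : Fin n}
    {S : Finset (Fin n)} {M : Matrix (Cfg n) (Cfg n) ℂ} (hM : IsLocalOn S M)
    (hS : Disjoint (bond i) S) : (twoSite n i h * M).trace = 0 := by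
  set g : Fin 2 × Fin 2 → ℂ := fun pq => h pq pq
  have hdiag : ∀ x : Cfg n, (twoSite n i h * M) x x = g (x i, x (nxt i)) * M x x := fun x => by
    refine ((isLocalOn_twoSite h i).mul_apply_self_of_disjoint hM hS x).trans ?_
    rw [twoSite, if_pos fun _ _ _ => rfl]
  have hflip : ∀ pq : Fin 2 × Fin 2, (twoSite n i h * M).trace =
      ∑ x : Cfg n, g ((x i, x (nxt i)) + pq) * M x x := fun pq => by
    set v : Cfg n := Pi.single i pq.1 + Pi.single (nxt i) pq.2
    have hv : ∀ j ∈ S, v j = 0 := fun j hj => by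
      have hj' : j ∉ bond i := Finset.disjoint_right.mp hS hj
      simp only [bond, Finset.mem_insert, Finset.mem_singleton, not_or] at hj'
      simp [v, hj'.1, hj'.2]
    have hvi : v i = pq.1 := by simp [v, (nxt_ne_self hn i).symm]
    have hvn : v (nxt i) = pq.2 := by simp [v, nxt_ne_self hn i]
    rw [Matrix.trace, ← Equiv.sum_comp (Equiv.addRight v)]
    refine Finset.sum_congr rfl fun x _ => ?_
    simp only [Matrix.diag_apply, hdiag, Equiv.coe_addRight, Pi.add_apply, hvi, hvn, hM.2 v hv]
    rfl
  have htr' : ∀ x : Cfg n, ∑ pq, g ((x i, x (nxt i)) + pq) = 0 := fun x =>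
    (Equiv.sum_comp (Equiv.addLeft (x i, x (nxt i))) g).trans htr
  have : (4 : ℂ) * (twoSite n i h * M).trace = 0 := by
    calc (4 : ℂ) * (twoSite n i h * M).trace
        = ∑ pq : Fin 2 × Fin 2, (twoSite n i h * M).trace := by simp
      _ = ∑ x : Cfg n, (∑ pq, g ((x i, x (nxt i)) + pq)) * M x x := by
        simp_rw [Finset.sum_mul]
        rw [Finset.sum_comm]
        exact Finset.sum_congr rfl fun pq _ => hflip pq
      _ = 0 := by simp [htr']
  simpa using this

lemma trace_twoSite_four_eq_zero_of_hasIsolated (hn : 2 ≤ n) (htr : h.trace = 0)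
    {a b c d : Fin n} (hiso : HasIsolated Overlap a b c d) :
    (twoSite n a h * twoSite n b h * twoSite n c h * twoSite n d h).trace = 0 := by
  have hrot : ∀ a b c d : Fin n,
      (twoSite n a h * twoSite n b h * twoSite n c h * twoSite n d h).trace =
        (twoSite n b h * twoSite n c h * twoSite n d h * twoSite n a h).trace := fun a b c d => by
    rw [mul_assoc, mul_assoc, Matrix.trace_mul_comm]
    simp only [mul_assoc]
  have hfirst : ∀ a b c d : Fin n,
      Isolated Overlap a b c d →
        (twoSite n a h * twoSite n b h * twoSite n c h * twoSite n d h).trace = 0 := by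
    rintro a b c d ⟨hb, hc, hd⟩
    simp only [Overlap, not_not] at hb hc hd
    rw [mul_assoc, mul_assoc]
    exact trace_twoSite_mul_eq_zero h hn htr ((isLocalOn_twoSite h b).mul
      ((isLocalOn_twoSite h c).mul (isLocalOn_twoSite h d)))
      (Finset.disjoint_union_right.mpr ⟨hb, Finset.disjoint_union_right.mpr ⟨hc, hd⟩⟩)
  rcases hiso with H | H | H | H
  · exact hfirst a b c d H
  · rw [hrot]; exact hfirst b c d a H
  · rw [hrot, hrot]; exact hfirst c d a b H
  · rw [hrot, hrot, hrot]; exact hfirst d a b c H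

section LinftyNorm
attribute [local instance] Matrix.linftyOpNormedAddCommGroup Matrix.linftyOpNormedRing

lemma linfty_opNorm_twoSite_le (i : Fin n) : ‖twoSite n i h‖ ≤ ‖h‖ := by
  refine Matrix.linfty_opNorm_le_of_sum_norm_le (norm_nonneg h) fun x => ?_
  set agree := Finset.univ.filter fun y : Cfg n => ∀ j, j ≠ i → j ≠ nxt i → x j = y j
  have hinj : Set.InjOn (fun y : Cfg n => (y i, y (nxt i))) agree := by
    intro y hy y' hy' hyy'
    simp only [agree, Finset.coe_filter, Finset.mem_univ, true_and, Set.mem_ofPred_eq] at hy hy'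
    obtain ⟨h1, h2⟩ := Prod.mk.inj hyy'
    funext j
    by_cases hji : j = i
    · exact hji ▸ h1
    by_cases hjn : j = nxt i
    · exact hjn ▸ h2
    rw [← hy j hji hjn, ← hy' j hji hjn]
  calc ∑ y, ‖twoSite n i h x y‖
      = ∑ y ∈ agree, ‖h (x i, x (nxt i)) (y i, y (nxt i))‖ := by
        rw [Finset.sum_filter]
        exact Finset.sum_congr rfl fun y _ => by unfold twoSite; split_ifs <;> simp
    _ = ∑ pq ∈ agree.image (fun y : Cfg n => (y i, y (nxt i))), ‖h (x i, x (nxt i)) pq‖ := by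
        rw [Finset.sum_image hinj]
    _ ≤ ∑ pq, ‖h (x i, x (nxt i)) pq‖ :=
        Finset.sum_le_sum_of_subset_of_nonneg (Finset.subset_univ _) fun _ _ _ => norm_nonneg _
    _ ≤ ‖h‖ := h.sum_norm_le_linfty_opNorm _

lemma norm_trace_twoSite_four_le (a b c d : Fin n) :
    ‖(twoSite n a h * twoSite n b h * twoSite n c h * twoSite n d h).trace‖ ≤ 2 ^ n * ‖h‖ ^ 4 := by
  have hprod : ‖twoSite n a h * twoSite n b h * twoSite n c h * twoSite n d h‖ ≤ ‖h‖ ^ 4 := by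
    have ha := linfty_opNorm_twoSite_le h a
    have hb := linfty_opNorm_twoSite_le h b
    have hc := linfty_opNorm_twoSite_le h c
    have hd := linfty_opNorm_twoSite_le h d
    calc _ ≤ ‖twoSite n a h‖ * ‖twoSite n b h‖ * ‖twoSite n c h‖ * ‖twoSite n d h‖ := by
          refine (norm_mul_le _ _).trans ?_
          gcongr
          refine (norm_mul_le _ _).trans ?_
          gcongr
          exact norm_mul_le _ _
      _ ≤ ‖h‖ ^ 4 := by rw [pow_succ, pow_succ, pow_succ, pow_one]; gcongr
  calc _ ≤ Fintype.card (Cfg n) * ‖twoSite n a h * twoSite n b h * twoSite n c h * twoSite n d h‖ :=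
        Matrix.norm_trace_le_card_mul_linfty_opNorm _
    _ ≤ Fintype.card (Cfg n) * ‖h‖ ^ 4 := by gcongr
    _ = 2 ^ n * ‖h‖ ^ 4 := by simp

lemma norm_trace_ham_pow_four_le (hn : 2 ≤ n) (htr : h.trace = 0) :
    ‖(ham h n ^ 4).trace‖ ≤ 756 * ‖h‖ ^ 4 * n ^ 2 * 2 ^ n := by
  have hcount := sum_ite_not_hasIsolated_le (R := Overlap) (fun _ _ => Overlap.symm) overlap_self
    (card_filter_overlap_le (n := n))
  have hterm : ∀ a b c d : Fin n,
      ‖(twoSite n a h * twoSite n b h * twoSite n c h * twoSite n d h).trace‖ ≤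
        2 ^ n * ‖h‖ ^ 4 * (if HasIsolated Overlap a b c d then 0 else 1) := fun a b c d => by
    split_ifs with hiso
    · simp [trace_twoSite_four_eq_zero_of_hasIsolated h hn htr hiso]
    · simpa using norm_trace_twoSite_four_le h a b c d
  have hn1 : (1 : ℝ) ≤ n := by exact_mod_cast (by omega : 1 ≤ n)
  rw [ham, Finset.sum_pow_four]
  simp only [Matrix.trace_sum]
  calc _ ≤ ∑ a, ∑ b, ∑ c, ∑ d,
          2 ^ n * ‖h‖ ^ 4 * (if HasIsolated Overlap a b c d then 0 else 1 : ℝ) :=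
        norm_sum_le_of_le _ fun a _ => norm_sum_le_of_le _ fun b _ =>
          norm_sum_le_of_le _ fun c _ => norm_sum_le_of_le _ fun d _ => hterm a b c d
    _ ≤ 2 ^ n * ‖h‖ ^ 4 * (3 * (3 * n) ^ 2 + (3 ^ 2) ^ 3 * n) := by
        simp only [← Finset.mul_sum]
        gcongr
        simpa using hcount
    _ ≤ 2 ^ n * ‖h‖ ^ 4 * (756 * n ^ 2) := by gcongr; nlinarith
    _ = 756 * ‖h‖ ^ 4 * n ^ 2 * 2 ^ n := by ring

lemma exists_sum_eigenvalue_pow_four_le (htr : h.trace = 0) :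
    ∃ M : ℝ, ∀ n : ℕ, 2 ≤ n → ∀ (U : Matrix (Cfg n) (Cfg n) ℂ) (E : Cfg n → ℝ),
      U ∈ Matrix.unitaryGroup (Cfg n) ℂ →
      ham h n = U * Matrix.diagonal (fun j => (E j : ℂ)) * Uᴴ →
      ∑ j, E j ^ 4 ≤ M * n ^ 2 * 2 ^ n := by
  refine ⟨756 * ‖h‖ ^ 4, fun n hn U E hU hdecomp => ?_⟩
  have htrace := trace_pow_eq_sum_pow_of_eq_unitary_conj hU hdecomp 4
  have hnonneg : 0 ≤ ∑ j, E j ^ 4 := Finset.sum_nonneg fun j _ => by positivity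
  calc ∑ j, E j ^ 4 = ‖(ham h n ^ 4).trace‖ := by
        simp_rw [htrace, ← Complex.ofReal_pow]
        rw [← Complex.ofReal_sum, Complex.norm_real, Real.norm_of_nonneg hnonneg]
    _ ≤ _ := norm_trace_ham_pow_four_le h hn htr

end LinftyNorm

end SpinChain

lemma exists_norm_le_mul_abs_of_contDiffOn {E : Type*} [NormedAddCommGroup E] [NormedSpace ℝ E]
    {δ : ℝ} (hδ : 0 < δ) {f : ℝ → E} (hf : ContDiffOn ℝ 1 f (Set.Icc (-δ) δ)) (hf0 : f 0 = 0) :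
    ∃ K : ℝ, ∀ x ∈ Set.Icc (-δ) δ, ‖f x‖ ≤ K * |x| := by
  set s := Set.Icc (-δ) δ
  have h0 : (0 : ℝ) ∈ s := ⟨by linarith, hδ.le⟩
  have hderiv : ContinuousOn (fun x => ‖derivWithin f s x‖) s :=
    (hf.continuousOn_derivWithin (uniqueDiffOn_Icc (by linarith)) le_rfl).norm
  obtain ⟨x₀, -, hmax⟩ := isCompact_Icc.exists_isMaxOn ⟨0, h0⟩ hderiv
  refine ⟨‖derivWithin f s x₀‖, fun x hx => ?_⟩
  simpa [hf0] using (convex_Icc (-δ) δ).norm_image_sub_le_of_norm_derivWithin_le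
    (hf.differentiableOn one_ne_zero) (fun y hy => hmax hy) h0 hx

lemma exists_norm_diag_le_of_eth {δ : ℝ} (hδ : 0 < δ) {E : ∀ n : ℕ, Cfg n → ℝ}
    {U A : ∀ n : ℕ, Matrix (Cfg n) (Cfg n) ℂ} {f : ℝ → ℂ} (hETH : ETH δ E U A f) (hf0 : f 0 = 0)
    (hA : ∀ n : ℕ, 3 ≤ n → ∀ j, ‖((U n)ᴴ * A n * U n) j j‖ ≤ 1) :
    ∃ L C : ℝ, ∀ n : ℕ, 3 ≤ n → ∀ j,
      ‖((U n)ᴴ * A n * U n) j j‖ ≤ L * |E n j| / n + C / n ^ 2 := by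
  obtain ⟨hsmooth, -, herr⟩ := hETH
  obtain ⟨K, hK⟩ := exists_norm_le_mul_abs_of_contDiffOn hδ (hsmooth.of_le (by norm_num)) hf0
  obtain ⟨C, hC⟩ := herr 2 two_pos
  refine ⟨max K 0 + δ⁻¹, max C 0, fun n hn j => ?_⟩
  have hn0 : (0 : ℝ) < n := by positivity
  have hC' : 0 ≤ max C 0 / n ^ 2 := by positivity
  have hL : 0 ≤ max K 0 * |E n j| / n := by positivity
  rw [add_mul, add_div]
  by_cases hwin : |E n j| ≤ δ * n
  · have hmem : E n j / n ∈ Set.Icc (-δ) δ := by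
      rw [Set.mem_Icc, ← abs_le, abs_div, Nat.abs_cast, div_le_iff₀ hn0]
      exact hwin
    have hf : ‖f (E n j / n)‖ ≤ max K 0 * |E n j| / n := by
      calc ‖f (E n j / n)‖ ≤ K * |E n j / n| := hK _ hmem
        _ ≤ max K 0 * |E n j / n| := by gcongr; exact le_max_left K 0
        _ = max K 0 * |E n j| / n := by rw [abs_div, Nat.abs_cast, mul_div_assoc]
    have hB : ‖((U n)ᴴ * A n * U n) j j - f (E n j / n)‖ ≤ max C 0 / n ^ 2 := by
      calc _ ≤ C * (n : ℝ) ^ (-2 : ℝ) := hC n hn j hwin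
        _ ≤ max C 0 * (n : ℝ) ^ (-2 : ℝ) := by gcongr; exact le_max_left C 0
        _ = max C 0 / n ^ 2 := by rw [Real.rpow_neg hn0.le, Real.rpow_two, div_eq_mul_inv]
    have hδE : 0 ≤ δ⁻¹ * |E n j| / n := by positivity
    calc _ ≤ ‖((U n)ᴴ * A n * U n) j j - f (E n j / n)‖ + ‖f (E n j / n)‖ :=
          norm_le_norm_sub_add _ _
      _ ≤ _ := by linarith
  · have : 1 ≤ δ⁻¹ * |E n j| / n := by
      rw [le_div_iff₀ hn0, one_mul, inv_mul_eq_div, le_div_iff₀ hδ]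
      linarith
    linarith [hA n hn j]

lemma sum_pow_four_le_of_forall_le {ι : Type*} [Fintype ι] {b e : ι → ℝ} {L C M n : ℝ} (hn : 1 ≤ n)
    (hb : ∀ j, 0 ≤ b j ∧ b j ≤ L * |e j| / n + C / n ^ 2)
    (he : ∑ j, e j ^ 4 ≤ M * n ^ 2 * Fintype.card ι) :
    ∑ j, b j ^ 4 ≤ (8 * L ^ 4 * M + 8 * C ^ 4) / n ^ 2 * Fintype.card ι := by
  have hn0 : 0 < n := by linarith
  -- `8 (s⁴ + t⁴) - (s + t)⁴ = (s - t)² (5 (s + t)² + 2 s² + 2 t²)`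
  have hpow : ∀ s t : ℝ, (s + t) ^ 4 ≤ 8 * (s ^ 4 + t ^ 4) := fun s t => by
    nlinarith [mul_nonneg (sq_nonneg (s - t)) (sq_nonneg (s + t)),
      mul_nonneg (sq_nonneg (s - t)) (sq_nonneg s), mul_nonneg (sq_nonneg (s - t)) (sq_nonneg t)]
  have hpoint : ∀ j, b j ^ 4 ≤ 8 * L ^ 4 / n ^ 4 * e j ^ 4 + 8 * C ^ 4 / n ^ 8 := fun j => by
    calc b j ^ 4 ≤ (L * |e j| / n + C / n ^ 2) ^ 4 := pow_le_pow_left₀ (hb j).1 (hb j).2 4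
      _ ≤ 8 * ((L * |e j| / n) ^ 4 + (C / n ^ 2) ^ 4) := hpow _ _
      _ = 8 * L ^ 4 / n ^ 4 * e j ^ 4 + 8 * C ^ 4 / n ^ 8 := by
        rw [div_pow, div_pow, mul_pow, pow_abs, abs_of_nonneg (by positivity : 0 ≤ e j ^ 4)]
        ring
  have hn8 : 8 * C ^ 4 / n ^ 8 ≤ 8 * C ^ 4 / n ^ 2 :=
    div_le_div_of_nonneg_left (by positivity) (by positivity) (pow_le_pow_right₀ hn (by norm_num))
  calc ∑ j, b j ^ 4 ≤ ∑ j, (8 * L ^ 4 / n ^ 4 * e j ^ 4 + 8 * C ^ 4 / n ^ 8) :=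
        Finset.sum_le_sum fun j _ => hpoint j
    _ = 8 * L ^ 4 / n ^ 4 * ∑ j, e j ^ 4 + 8 * C ^ 4 / n ^ 8 * Fintype.card ι := by
        rw [Finset.sum_add_distrib, ← Finset.mul_sum]
        simp [mul_comm]
    _ ≤ 8 * L ^ 4 / n ^ 4 * (M * n ^ 2 * Fintype.card ι) + 8 * C ^ 4 / n ^ 2 * Fintype.card ι := by
        gcongr
    _ = (8 * L ^ 4 * M + 8 * C ^ 4) / n ^ 2 * Fintype.card ι := by
        field_simp

theorem stmt16_general (h : Matrix (Fin 2 × Fin 2) (Fin 2 × Fin 2) ℂ)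
    (htr : h.trace = 0)
    (δ : ℝ) (hδ0 : 0 < δ)
    (U : ∀ n : ℕ, Matrix (Cfg n) (Cfg n) ℂ) (E : ∀ n : ℕ, Cfg n → ℝ)
    (hU : ∀ n : ℕ, 3 ≤ n → U n ∈ Matrix.unitaryGroup (Cfg n) ℂ)
    (hdecomp : ∀ n : ℕ, 3 ≤ n →
      ham h n = U n * Matrix.diagonal (fun j => (E n j : ℂ)) * (U n)ᴴ)
    (A : ∀ n : ℕ, Matrix (Cfg n) (Cfg n) ℂ)
    (hnormA : ∀ n : ℕ, 3 ≤ n → opNorm (A n) ≤ 1)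
    (fA : ℝ → ℂ) (hETH : ETH δ E U A fA) (hfA0 : fA 0 = 0) :
    ∃ C : ℝ, ∀ n : ℕ, 3 ≤ n →
      (∑ j : Cfg n, ‖((U n)ᴴ * A n * U n) j j‖ ^ 4) / 2 ^ n ≤ C / (n : ℝ) ^ 2 := by
  obtain ⟨M, hM⟩ := exists_sum_eigenvalue_pow_four_le h htr
  obtain ⟨L, C, hLC⟩ := exists_norm_diag_le_of_eth hδ0 hETH hfA0 fun n hn j =>
    (norm_conjTranspose_mul_mul_apply_le (hU n hn) (A n) j).trans (hnormA n hn)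
  refine ⟨8 * L ^ 4 * M + 8 * C ^ 4, fun n hn => ?_⟩
  have hsum := sum_pow_four_le_of_forall_le (by exact_mod_cast (by omega : 1 ≤ n))
    (fun j => ⟨norm_nonneg _, hLC n hn j⟩)
    (by simpa using hM n (by omega) (U n) (E n) (hU n hn) (hdecomp n hn))
  rw [div_le_iff₀ (by positivity)]
  simpa using hsum

theorem stmt16 (h : Matrix (Fin 2 × Fin 2) (Fin 2 × Fin 2) ℂ)
    (hherm : h.IsHermitian) (htr : h.trace = 0) (hne : h ≠ 0) (hnorm : opNorm h ≤ 1)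
    (horth : ∀ n : ℕ, 3 ≤ n → ∀ i j : Fin n, i ≠ j →
      (twoSite n i h * twoSite n j h).trace = 0)
    (δ : ℝ) (hδ0 : 0 < δ) (hδ1 : δ < 1) (k : ℕ) (hk : 0 < k)
    (U : ∀ n : ℕ, Matrix (Cfg n) (Cfg n) ℂ) (E : ∀ n : ℕ, Cfg n → ℝ)
    (hU : ∀ n : ℕ, 3 ≤ n → U n ∈ Matrix.unitaryGroup (Cfg n) ℂ)
    (hdecomp : ∀ n : ℕ, 3 ≤ n →
      ham h n = U n * Matrix.diagonal (fun j => (E n j : ℂ)) * (U n)ᴴ)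
    (A : ∀ n : ℕ, Matrix (Cfg n) (Cfg n) ℂ)
    (htrA : ∀ n : ℕ, 3 ≤ n → (A n).trace = 0)
    (hnormA : ∀ n : ℕ, 3 ≤ n → opNorm (A n) ≤ 1)
    (hsuppA : ∀ n : ℕ, 3 ≤ n → SupportedOnConsec k (A n))
    (fA : ℝ → ℂ) (hETH : ETH δ E U A fA) (hfA0 : fA 0 = 0) :
    ∃ C : ℝ, ∀ n : ℕ, 3 ≤ n →
      (∑ j : Cfg n, ‖((U n)ᴴ * A n * U n) j j‖ ^ 4) / 2 ^ n ≤ C / (n : ℝ) ^ 2 :=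
  stmt16_general h htr δ hδ0 U E hU hdecomp A hnormA fA hETH hfA0
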